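/- arXiv:math/0412009 — 5 statements merged into one kernel-verified Lean document; each statement's English description precedes it below -/
import Mathlib

section
/- Let K be a number field, 𝔞 a fractional ideal, and let the group SL(O_K ⊕ 𝔞) = {A ∈ SL(2,K) : A = (a b; c d) with a,d ∈ O_K, b ∈ 𝔞, c ∈ 𝔞^{-1}} act on P¹(K) by fractional linear transformations. Then the map sending [α:β] to the ideal class of O_K·α + 𝔞·β induces a bijection between the orbit space SL(O_K ⊕ 𝔞)\P¹(K) and the ideal class group CL(K). -/
open NumberField FractionalIdeal

variable (K : Type) [Field K] [NumberField K]

/-- Membership in `SL(𝓞_K ⊕ 𝔞)`: a matrix `(a b; c d) ∈ SL(2,K)` with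
`a, d ∈ 𝓞_K`, `b ∈ 𝔞`, `c ∈ 𝔞⁻¹`. -/
def memSLa (𝔞 : FractionalIdeal (nonZeroDivisors (𝓞 K)) K)
    (g : Matrix.SpecialLinearGroup (Fin 2) K) : Prop :=
  (g : Matrix (Fin 2) (Fin 2) K) 0 0 ∈ (1 : FractionalIdeal (nonZeroDivisors (𝓞 K)) K) ∧
  (g : Matrix (Fin 2) (Fin 2) K) 0 1 ∈ 𝔞 ∧
  (g : Matrix (Fin 2) (Fin 2) K) 1 0 ∈ 𝔞⁻¹ ∧
  (g : Matrix (Fin 2) (Fin 2) K) 1 1 ∈ (1 : FractionalIdeal (nonZeroDivisors (𝓞 K)) K)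

/-- The fractional ideal `𝓞_K·α + 𝔞·β` attached to `[α : β] ∈ P¹(K)`. -/
noncomputable def idlOf (𝔞 : FractionalIdeal (nonZeroDivisors (𝓞 K)) K) (v : Fin 2 → K) :
    FractionalIdeal (nonZeroDivisors (𝓞 K)) K :=
  spanSingleton (nonZeroDivisors (𝓞 K)) (v 0) + 𝔞 * spanSingleton (nonZeroDivisors (𝓞 K)) (v 1)

/-!
The ideal `𝓞_K·α + 𝔞·β` is the set of combinations `r α + s β` with `r ∈ 𝓞_K`, `s ∈ 𝔞`, and the
entry pattern of `SL(𝓞_K ⊕ 𝔞)` is exactly what keeps such combinations of `g (α, β)` inside it;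
since `g⁻¹` has the same pattern, the ideal is an invariant of the orbit of the vector, and
scaling the vector scales the ideal. Conversely, if `𝓞_K·α + 𝔞·β = 𝔟`, then `1 ∈ 𝔟⁻¹𝔟` yields
`x ∈ 𝔟⁻¹`, `y ∈ 𝔞𝔟⁻¹` with `x α + y β = 1`, and `!![x, y; -β, α]` sends `(α, β)` to `(1, 0)`.
For two vectors with the same ideal `𝔟`, the first such matrix followed by the inverse of the
second has entries in `𝔟𝔟⁻¹ = 𝓞_K`, `𝔟 · 𝔞𝔟⁻¹ = 𝔞`, `𝔞⁻¹𝔟 · 𝔟⁻¹ = 𝔞⁻¹`, so it lies in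
`SL(𝓞_K ⊕ 𝔞)`. Every nonzero `𝔟` is attained because in a Dedekind domain any ideal containing
`𝓞_K·α ≠ 0` has the form `𝓞_K·α + 𝔞·β`.
-/

open Matrix
open scoped nonZeroDivisors

section UnimodularFinTwo

variable {R : Type*} [CommRing R] {x y : R} {v : Fin 2 → R}

theorem Matrix.det_unimodular_fin_two (h : x * v 0 + y * v 1 = 1) :
    !![x, y; -v 1, v 0].det = 1 := by
  rw [det_fin_two_of]; linear_combination h

theorem Matrix.unimodular_fin_two_mulVec (h : x * v 0 + y * v 1 = 1) :
    !![x, y; -v 1, v 0] *ᵥ v = ![1, 0] := by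
  ext i; fin_cases i
  · simpa [mulVec, dotProduct, Fin.sum_univ_two] using h
  · simp [mulVec, dotProduct, Fin.sum_univ_two, mul_comm]

theorem Matrix.det_unimodular_inv_fin_two (h : x * v 0 + y * v 1 = 1) :
    !![v 0, -y; v 1, x].det = 1 := by
  rw [det_fin_two_of]; linear_combination h

theorem Matrix.unimodular_inv_fin_two_mulVec (v : Fin 2 → R) :
    !![v 0, -y; v 1, x] *ᵥ ![1, 0] = v := by
  ext i; fin_cases i <;> simp [mulVec, dotProduct, Fin.sum_univ_two]

end UnimodularFinTwo

theorem FractionalIdeal.mul_add_mul_mem {R L : Type*} [CommRing R] [Field L] [Algebra R L]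
    {S : Submonoid R} {P Q P' Q' T : FractionalIdeal S L} {p q p' q' : L}
    (hp : p ∈ P) (hq : q ∈ Q) (hp' : p' ∈ P') (hq' : q' ∈ Q')
    (h : P * Q ≤ T) (h' : P' * Q' ≤ T) : p * q + p' * q' ∈ T :=
  Submodule.add_mem _ (h (mul_mem_mul hp hq)) (h' (mul_mem_mul hp' hq'))

namespace CuspIdealClass

variable {K} {𝔞 : FractionalIdeal (𝓞 K)⁰ K}

theorem idlOf_smul (c : K) (w : Fin 2 → K) :
    idlOf K 𝔞 (c • w) = spanSingleton (𝓞 K)⁰ c * idlOf K 𝔞 w := by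
  simp only [idlOf, Pi.smul_apply, smul_eq_mul, ← spanSingleton_mul_spanSingleton, mul_add]
  ring

theorem mem_mul_idlOf_iff (𝔠 : FractionalIdeal (𝓞 K)⁰ K) (v : Fin 2 → K) (z : K) :
    z ∈ 𝔠 * idlOf K 𝔞 v ↔ ∃ r ∈ 𝔠, ∃ s ∈ 𝔠 * 𝔞, r * v 0 + s * v 1 = z := by
  rw [idlOf, mul_add, ← mul_assoc, mem_add]
  simp only [mul_comm _ (spanSingleton _ _), mem_singleton_mul]
  constructor
  · rintro ⟨_, ⟨r, hr, rfl⟩, _, ⟨s, hs, rfl⟩, rfl⟩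
    exact ⟨r, hr, s, hs, by ring⟩
  · rintro ⟨r, hr, s, hs, rfl⟩
    exact ⟨_, ⟨r, hr, by ring⟩, _, ⟨s, hs, by ring⟩, rfl⟩

theorem mem_idlOf_iff (v : Fin 2 → K) (z : K) :
    z ∈ idlOf K 𝔞 v ↔ ∃ r ∈ (1 : FractionalIdeal (𝓞 K)⁰ K), ∃ s ∈ 𝔞, r * v 0 + s * v 1 = z := by
  simpa only [one_mul] using mem_mul_idlOf_iff 1 v z

theorem apply_zero_mem_idlOf (v : Fin 2 → K) : v 0 ∈ idlOf K 𝔞 v :=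
  (mem_idlOf_iff v _).2 ⟨1, one_mem_one _, 0, zero_mem _, by ring⟩

theorem apply_one_mem_inv_mul_idlOf (ha : 𝔞 ≠ 0) (v : Fin 2 → K) : v 1 ∈ 𝔞⁻¹ * idlOf K 𝔞 v :=
  (mem_mul_idlOf_iff _ v _).2
    ⟨0, zero_mem _, 1, by rw [inv_mul_cancel₀ ha]; exact one_mem_one _, by ring⟩

theorem idlOf_ne_zero (ha : 𝔞 ≠ 0) {v : Fin 2 → K} (hv : v ≠ 0) : idlOf K 𝔞 v ≠ 0 := by
  intro h
  have h0 := apply_zero_mem_idlOf (𝔞 := 𝔞) v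
  have h1 := apply_one_mem_inv_mul_idlOf ha v
  rw [h, FractionalIdeal.mem_zero_iff] at h0
  rw [h, mul_zero, FractionalIdeal.mem_zero_iff] at h1
  exact hv (funext fun i => by fin_cases i <;> assumption)

theorem idlOf_mulVec_le {g : SpecialLinearGroup (Fin 2) K} (hg : memSLa K 𝔞 g) (v : Fin 2 → K) :
    idlOf K 𝔞 ((g : Matrix (Fin 2) (Fin 2) K) *ᵥ v) ≤ idlOf K 𝔞 v := by
  obtain ⟨h00, h01, h10, h11⟩ := hg
  have h𝔞 : 𝔞 * 𝔞⁻¹ ≤ 1 := mul_one_div_le_one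
  intro z hz
  obtain ⟨r, hr, s, hs, rfl⟩ := (mem_idlOf_iff _ z).1 hz
  refine (mem_idlOf_iff v _).2 ⟨r * g 0 0 + s * g 1 0, ?_, r * g 0 1 + s * g 1 1, ?_, ?_⟩
  · exact mul_add_mul_mem hr h00 hs h10 (one_mul 1).le h𝔞
  · exact mul_add_mul_mem hr h01 hs h11 (one_mul 𝔞).le (mul_one 𝔞).le
  · simp only [mulVec, dotProduct, Fin.sum_univ_two]; ring

theorem memSLa_inv {g : SpecialLinearGroup (Fin 2) K} (hg : memSLa K 𝔞 g) : memSLa K 𝔞 g⁻¹ := by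
  obtain ⟨h00, h01, h10, h11⟩ := hg
  rw [memSLa, Matrix.SpecialLinearGroup.SL2_inv_expl]
  simp only [cons_val', cons_val_zero, empty_val', cons_val_fin_one, cons_val_one]
  exact ⟨h11, Submodule.neg_mem _ h01, Submodule.neg_mem _ h10, h00⟩

theorem idlOf_mulVec {g : SpecialLinearGroup (Fin 2) K} (hg : memSLa K 𝔞 g) (v : Fin 2 → K) :
    idlOf K 𝔞 ((g : Matrix (Fin 2) (Fin 2) K) *ᵥ v) = idlOf K 𝔞 v := by
  refine le_antisymm (idlOf_mulVec_le hg v) ?_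
  have h := idlOf_mulVec_le (memSLa_inv hg) ((g : Matrix (Fin 2) (Fin 2) K) *ᵥ v)
  rwa [mulVec_mulVec, ← Matrix.SpecialLinearGroup.coe_mul, inv_mul_cancel,
    Matrix.SpecialLinearGroup.coe_one, one_mulVec] at h

theorem exists_mem_inv_add_mul_eq_one {𝔟 : FractionalIdeal (𝓞 K)⁰ K} (hb : 𝔟 ≠ 0)
    {v : Fin 2 → K} (hv : idlOf K 𝔞 v = 𝔟) :
    ∃ x ∈ 𝔟⁻¹, ∃ y ∈ 𝔞 * 𝔟⁻¹, x * v 0 + y * v 1 = 1 := by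
  subst hv
  have h1 : (1 : K) ∈ (idlOf K 𝔞 v)⁻¹ * idlOf K 𝔞 v := by
    rw [inv_mul_cancel₀ hb]; exact one_mem_one _
  simpa only [mul_comm _ 𝔞] using (mem_mul_idlOf_iff _ v 1).1 h1

theorem exists_memSLa_mulVec_eq (ha : 𝔞 ≠ 0) {𝔟 : FractionalIdeal (𝓞 K)⁰ K} (hb : 𝔟 ≠ 0)
    {v w : Fin 2 → K} (hv : idlOf K 𝔞 v = 𝔟) (hw : idlOf K 𝔞 w = 𝔟) :
    ∃ g : SpecialLinearGroup (Fin 2) K,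
      memSLa K 𝔞 g ∧ (g : Matrix (Fin 2) (Fin 2) K) *ᵥ v = w := by
  obtain ⟨x, hx, y, hy, hxy⟩ := exists_mem_inv_add_mul_eq_one hb hv
  obtain ⟨x', hx', y', hy', hxy'⟩ := exists_mem_inv_add_mul_eq_one hb hw
  have hv0 : v 0 ∈ 𝔟 := hv ▸ apply_zero_mem_idlOf v
  have hw0 : w 0 ∈ 𝔟 := hw ▸ apply_zero_mem_idlOf w
  have hv1 : v 1 ∈ 𝔞⁻¹ * 𝔟 := hv ▸ apply_one_mem_inv_mul_idlOf ha v
  have hw1 : w 1 ∈ 𝔞⁻¹ * 𝔟 := hw ▸ apply_one_mem_inv_mul_idlOf ha w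
  let g : SpecialLinearGroup (Fin 2) K := ⟨!![w 0, -y'; w 1, x'] * !![x, y; -v 1, v 0], by
    rw [det_mul, det_unimodular_inv_fin_two hxy', det_unimodular_fin_two hxy, one_mul]⟩
  have hg : (g : Matrix (Fin 2) (Fin 2) K) = !![w 0, -y'; w 1, x'] * !![x, y; -v 1, v 0] := rfl
  refine ⟨g, ?_, ?_⟩
  · rw [memSLa, hg, mul_fin_two]
    simp only [of_apply, cons_val', cons_val_zero, empty_val', cons_val_fin_one, cons_val_one]
    have hy'' := Submodule.neg_mem _ hy'
    have hv1' := Submodule.neg_mem _ hv1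
    refine ⟨mul_add_mul_mem hw0 hx hy'' hv1' ?_ ?_, mul_add_mul_mem hw0 hy hy'' hv0 ?_ ?_,
      mul_add_mul_mem hw1 hx hx' hv1' ?_ ?_, mul_add_mul_mem hw1 hy hx' hv0 ?_ ?_⟩ <;>
      exact le_of_eq (by field_simp)
  · rw [hg, ← mulVec_mulVec, unimodular_fin_two_mulVec hxy, unimodular_inv_fin_two_mulVec]

theorem exists_idlOf_eq (ha : 𝔞 ≠ 0) {𝔟 : FractionalIdeal (𝓞 K)⁰ K} (hb : 𝔟 ≠ 0) :
    ∃ v : Fin 2 → K, v ≠ 0 ∧ idlOf K 𝔞 v = 𝔟 := by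
  obtain ⟨α, hα, hα0⟩ : ∃ α ∈ 𝔟, α ≠ 0 := by simpa using mt FractionalIdeal.eq_zero_iff.mpr hb
  obtain ⟨β, hβ⟩ := IsDedekindDomain.exists_add_spanSingleton_mul_eq
    (spanSingleton_le_iff_mem.2 hα) (spanSingleton_ne_zero_iff.2 hα0) ha
  refine ⟨![α, β], fun h => hα0 (congrFun h 0), ?_⟩
  simpa [idlOf, mul_comm] using hβ

end CuspIdealClass

open CuspIdealClass in
/-- Cusp–ideal class correspondence: the map `[α:β] ↦ [𝓞_K·α + 𝔞·β]` induces a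
bijection between `SL(𝓞_K ⊕ 𝔞)\P¹(K)` and the ideal class group of `K`:
(1) two nonzero vectors are in the same `SL(𝓞_K ⊕ 𝔞)`-orbit in `P¹(K)` iff the
attached fractional ideals lie in the same ideal class, and
(2) every nonzero fractional ideal arises as `𝓞_K·α + 𝔞·β` for some `[α:β]`. -/
theorem cusp_ideal_class_correspondence
    (𝔞 : FractionalIdeal (nonZeroDivisors (𝓞 K)) K) (ha : 𝔞 ≠ 0) :
    (∀ v w : Fin 2 → K, v ≠ 0 → w ≠ 0 →
      ((∃ g : Matrix.SpecialLinearGroup (Fin 2) K, memSLa K 𝔞 g ∧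
          ∃ c : K, c ≠ 0 ∧ (g : Matrix (Fin 2) (Fin 2) K).mulVec v = c • w) ↔
        (∃ k : K, k ≠ 0 ∧
          idlOf K 𝔞 v = spanSingleton (nonZeroDivisors (𝓞 K)) k * idlOf K 𝔞 w))) ∧
    (∀ 𝔟 : FractionalIdeal (nonZeroDivisors (𝓞 K)) K, 𝔟 ≠ 0 →
      ∃ v : Fin 2 → K, v ≠ 0 ∧ idlOf K 𝔞 v = 𝔟) := by
  refine ⟨fun v w hv _ => ⟨?_, ?_⟩, fun 𝔟 hb => exists_idlOf_eq ha hb⟩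
  · rintro ⟨g, hg, c, hc, hgv⟩
    exact ⟨c, hc, by rw [← idlOf_mulVec hg, hgv, idlOf_smul]⟩
  · rintro ⟨k, hk, hvw⟩
    obtain ⟨g, hg, hgv⟩ := exists_memSLa_mulVec_eq ha (idlOf_ne_zero ha hv) rfl
      (idlOf_smul k w ▸ hvw.symm)
    exact ⟨g, hg, k, hk, hgv⟩
end

section
/- Let α, β ∈ K with O_K·α + 𝔞·β = 𝔟 ≠ 0. Then there exist α*, β* ∈ K with αβ* − βα* = 1 (so that the matrix (α α*; β β*) lies in SL(2,K)) and O_K·β* + 𝔞^{-1}·α* = 𝔟^{-1}. -/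
/-!
Since `𝔟` is invertible, `1 ∈ 𝔟𝔟⁻¹ = α𝔟⁻¹ + β𝔞𝔟⁻¹`, so `1 = αβ* − βα*` with `β* ∈ 𝔟⁻¹` and
`α* ∈ 𝔞𝔟⁻¹`. Then `𝔠 = 𝓞β* + 𝔞⁻¹α*` lies in `𝔟⁻¹`, while `𝔠𝔟 ⊇ 𝓞β*α + 𝔞⁻¹𝔞α*β` contains
`αβ* − βα* = 1`; hence `𝔠𝔟 = 1` and `𝔠 = 𝔟⁻¹`.
-/

open NumberField FractionalIdeal

namespace FractionalIdeal

open scoped nonZeroDivisors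

variable {R K : Type*} [CommRing R] [IsDedekindDomain R] [Field K] [Algebra R K]
  [IsFractionRing R K] {𝔞 𝔟 : FractionalIdeal R⁰ K} {α β b c : K}

theorem exists_mem_inv_mul_sub_mul_eq_one (hb : 𝔟 ≠ 0)
    (h : spanSingleton R⁰ α + 𝔞 * spanSingleton R⁰ β = 𝔟) :
    ∃ b ∈ 𝔟⁻¹, ∃ c ∈ 𝔞 * 𝔟⁻¹, α * b - β * c = 1 := by
  have hone : (1 : K) ∈ spanSingleton R⁰ α * 𝔟⁻¹ + spanSingleton R⁰ β * (𝔞 * 𝔟⁻¹) := by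
    rw [← one_le, mul_left_comm, ← mul_assoc, ← add_mul, h, mul_inv_cancel₀ hb]
  obtain ⟨x, hx, y, hy, hxy⟩ := (mem_add _ _ _).mp hone
  obtain ⟨b, hb, rfl⟩ := mem_singleton_mul.mp hx
  obtain ⟨c, hc, rfl⟩ := mem_singleton_mul.mp hy
  exact ⟨b, hb, -c, mem_coe.mp (neg_mem (mem_coe.mpr hc)), by rw [mul_neg, sub_neg_eq_add, hxy]⟩

theorem spanSingleton_add_inv_mul_spanSingleton_eq_inv (ha : 𝔞 ≠ 0)
    (h : spanSingleton R⁰ α + 𝔞 * spanSingleton R⁰ β = 𝔟) (hb : b ∈ 𝔟⁻¹)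
    (hc : c ∈ 𝔞 * 𝔟⁻¹) (hbc : α * b - β * c = 1) :
    spanSingleton R⁰ b + 𝔞⁻¹ * spanSingleton R⁰ c = 𝔟⁻¹ := by
  set 𝔠 := spanSingleton R⁰ b + 𝔞⁻¹ * spanSingleton R⁰ c
  have hc_le : 𝔞⁻¹ * spanSingleton R⁰ c ≤ 𝔟⁻¹ := by
    calc 𝔞⁻¹ * spanSingleton R⁰ c ≤ 𝔞⁻¹ * (𝔞 * 𝔟⁻¹) := by
          gcongr; exact spanSingleton_le_iff_mem.mpr hc
      _ = 𝔟⁻¹ := by rw [inv_mul_cancel_left₀ ha]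
  have h𝔠_le : 𝔠 ≤ 𝔟⁻¹ := sup_le (spanSingleton_le_iff_mem.mpr hb) hc_le
  have hb_ne : 𝔟 ≠ 0 := by
    rintro rfl
    simp_all
  refine inv_eq_of_mul_eq_one_left (le_antisymm ?_ ?_) |>.symm
  · calc 𝔠 * 𝔟 ≤ 𝔟⁻¹ * 𝔟 := by gcongr
      _ = 1 := inv_mul_cancel₀ hb_ne
  · have hα : α ∈ 𝔟 := h ▸ (le_sup_left : spanSingleton R⁰ α ≤ _) (mem_spanSingleton_self _ α)
    have hβc : β * c ∈ 𝔠 * 𝔟 := by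
      have : (𝔞⁻¹ * spanSingleton R⁰ c) * (𝔞 * spanSingleton R⁰ β) ≤ 𝔠 * 𝔟 := by
        rw [← h]; gcongr <;> simp [𝔠]
      refine this ?_
      rw [mul_mul_mul_comm, inv_mul_cancel₀ ha, one_mul, spanSingleton_mul_spanSingleton,
        mul_comm]
      exact mem_spanSingleton_self _ _
    rw [one_le, ← hbc, mul_comm α]
    have hbα : b * α ∈ 𝔠 * 𝔟 :=
      mul_mem_mul ((le_sup_left : spanSingleton R⁰ b ≤ 𝔠) (mem_spanSingleton_self _ b)) hα
    exact mem_coe.mp (sub_mem (mem_coe.mpr hbα) (mem_coe.mpr hβc))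

end FractionalIdeal

/-- If `α, β ∈ K` satisfy `𝓞_K·α + 𝔞·β = 𝔟 ≠ 0`, then there exist `α*, β* ∈ K` with
`αβ* − βα* = 1` (so that `(α α*; β β*) ∈ SL(2,K)`) and `𝓞_K·β* + 𝔞⁻¹·α* = 𝔟⁻¹`. -/
theorem exists_sl2_completion (K : Type*) [Field K] [NumberField K]
    (𝔞 𝔟 : FractionalIdeal (nonZeroDivisors (𝓞 K)) K) (ha : 𝔞 ≠ 0) (hb : 𝔟 ≠ 0)
    (α β : K)
    (h : spanSingleton (nonZeroDivisors (𝓞 K)) α +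
      𝔞 * spanSingleton (nonZeroDivisors (𝓞 K)) β = 𝔟) :
    ∃ αs βs : K, α * βs - β * αs = 1 ∧
      spanSingleton (nonZeroDivisors (𝓞 K)) βs +
        𝔞⁻¹ * spanSingleton (nonZeroDivisors (𝓞 K)) αs = 𝔟⁻¹ := by
  obtain ⟨b, hb, c, hc, hbc⟩ := exists_mem_inv_mul_sub_mul_eq_one hb h
  exact ⟨c, b, hbc, spanSingleton_add_inv_mul_spanSingleton_eq_inv ha h hb hc hbc⟩
end

section
/- Let 𝔞 be a fractional ideal of a number field K and let P = O_K ⊕ 𝔞. Every rank one projective O_K-submodule of P is contained in 𝔟₀^{-1}·(x,y) for some (x,y) ∈ K² \ {(0,0)}, where 𝔟₀ = O_K·x + 𝔞^{-1}·y; moreover 𝔟₀^{-1}·(x,y) is itself a rank one projective O_K-submodule of P. -/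
open NumberField FractionalIdeal

variable (K : Type) [Field K] [NumberField K]

/-- The `𝓞 K`-linear map `K → K × K`, `c ↦ (c·x, c·y)`. -/
noncomputable def lineMap' (x y : K) : K →ₗ[𝓞 K] K × K :=
  (LinearMap.mulRight (𝓞 K) x).prod (LinearMap.mulRight (𝓞 K) y)

/-- The fractional ideal `𝔟₀ = 𝓞_K·x + 𝔞⁻¹·y`. -/
noncomputable def b0 (𝔞 : FractionalIdeal (nonZeroDivisors (𝓞 K)) K) (x y : K) :
    FractionalIdeal (nonZeroDivisors (𝓞 K)) K :=
  spanSingleton (nonZeroDivisors (𝓞 K)) x + 𝔞⁻¹ * spanSingleton (nonZeroDivisors (𝓞 K)) y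

/-- The submodule `𝔟₀⁻¹·(x,y)` of `K²`. -/
noncomputable def lineSubmodule (𝔞 : FractionalIdeal (nonZeroDivisors (𝓞 K)) K) (x y : K) :
    Submodule (𝓞 K) (K × K) :=
  Submodule.map (lineMap' K x y) ((b0 K 𝔞 x y)⁻¹ : FractionalIdeal (nonZeroDivisors (𝓞 K)) K)

/-- The submodule `P = 𝓞_K ⊕ 𝔞` of `K²`. -/
noncomputable def Pmod (𝔞 : FractionalIdeal (nonZeroDivisors (𝓞 K)) K) :
    Submodule (𝓞 K) (K × K) :=
  Submodule.prod ((1 : FractionalIdeal (nonZeroDivisors (𝓞 K)) K) : Submodule (𝓞 K) K)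
    (𝔞 : Submodule (𝓞 K) K)

/-!
A vector `c • (x, y)` lies in `P = 𝓞_K ⊕ 𝔞` iff `c x ∈ 𝓞_K` and `c y ∈ 𝔞`, i.e. iff
`c 𝔟₀ = c x 𝓞_K + c y 𝔞⁻¹ ≤ 𝓞_K`, i.e. iff `c ∈ 𝔟₀⁻¹`. Hence `P ∩ K (x, y) = 𝔟₀⁻¹ (x, y)`,
which is isomorphic to the invertible ideal `𝔟₀⁻¹`, so projective of rank one. Conversely a
submodule of rank one contains no two `𝓞_K`-independent vectors, so it lies on the `K`-line
through any of its nonzero vectors `(x, y)`, hence in `P ∩ K (x, y)`.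
-/

section DedekindDomain

variable {R L : Type*} [CommRing R] [IsDedekindDomain R] [Field L] [Algebra R L]
  [IsFractionRing R L]

theorem FractionalIdeal.le_inv_iff_mul_le_one {I J : FractionalIdeal (nonZeroDivisors R) L}
    (hJ : J ≠ 0) : I ≤ J⁻¹ ↔ I * J ≤ 1 := by
  rw [inv_eq, le_div_iff_mul_le hJ]

theorem FractionalIdeal.mem_inv_iff_spanSingleton_mul_le_one
    {I : FractionalIdeal (nonZeroDivisors R) L} (hI : I ≠ 0) (c : L) :
    c ∈ I⁻¹ ↔ spanSingleton _ c * I ≤ 1 := by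
  rw [← spanSingleton_le_iff_mem, le_inv_iff_mul_le_one hI]

theorem FractionalIdeal.inv_mul_le_one_iff {I J : FractionalIdeal (nonZeroDivisors R) L}
    (hI : I ≠ 0) : I⁻¹ * J ≤ 1 ↔ J ≤ I := by
  rw [mul_comm, ← le_inv_iff_mul_le_one (inv_ne_zero hI), inv_inv]

theorem FractionalIdeal.projective {I : FractionalIdeal (nonZeroDivisors R) L} (hI : I ≠ 0) :
    Module.Projective R I :=
  Submodule.projective_of_isUnit ((Ne.isUnit hI).map (coeSubmoduleHom _ L))

end DedekindDomain

section Domain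

variable {R L : Type*} [CommRing R] [IsDomain R] [Field L] [Algebra R L] [IsFractionRing R L]

theorem FractionalIdeal.rank_eq_one {I : FractionalIdeal (nonZeroDivisors R) L} (hI : I ≠ 0) :
    Module.rank R I = 1 := by
  have : Nontrivial I := Submodule.nontrivial_iff_ne_bot.mpr (mt coeToSubmodule_eq_bot.mp hI)
  refine le_antisymm ?_ (Cardinal.one_le_iff_pos.mpr rank_pos)
  calc Module.rank R I ≤ Module.rank R L := Submodule.rank_le _
    _ = Module.rank L L := (IsFractionRing.rank_right_eq R L L).symm
    _ = 1 := Module.rank_self L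

theorem Submodule.not_linearIndependent_pair_of_rank_le_one {M : Type*} [AddCommGroup M]
    [Module R M] {Q : Submodule R M} (hQ : Module.rank R Q ≤ 1) {u v : M} (hu : u ∈ Q)
    (hv : v ∈ Q) : ¬ LinearIndependent R ![u, v] := by
  intro hli
  have hliQ : LinearIndependent R ![(⟨u, hu⟩ : Q), ⟨v, hv⟩] :=
    .of_comp Q.subtype (by convert hli using 1; ext i; fin_cases i <;> rfl)
  have := hliQ.cardinal_lift_le_rank.trans (Cardinal.lift_monotone hQ)
  norm_num at this

theorem exists_smul_eq_of_not_linearIndependent_pair {V : Type*} [AddCommGroup V] [Module L V]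
    [Module R V] [IsScalarTower R L V] {u v : V} (hv : v ≠ 0)
    (h : ¬ LinearIndependent R ![v, u]) : ∃ c : L, c • v = u := by
  contrapose! h
  exact ((LinearIndependent.pair_iff' hv).mpr h).restrict_scalars' R

end Domain

section NumberField

variable {K}

theorem b0_ne_zero {𝔞 : FractionalIdeal (nonZeroDivisors (𝓞 K)) K} (ha : 𝔞 ≠ 0) {x y : K}
    (hxy : (x, y) ≠ (0, 0)) : b0 K 𝔞 x y ≠ 0 := by
  rw [b0, ← sup_eq_add, Ne, ← FractionalIdeal.bot_eq_zero, sup_eq_bot_iff,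
    FractionalIdeal.bot_eq_zero, mul_eq_zero, spanSingleton_eq_zero_iff, spanSingleton_eq_zero_iff]
  simpa [ha] using hxy

theorem lineMap'_mem_Pmod_iff {𝔞 : FractionalIdeal (nonZeroDivisors (𝓞 K)) K} (ha : 𝔞 ≠ 0)
    {x y : K} (hxy : (x, y) ≠ (0, 0)) (c : K) :
    lineMap' K x y c ∈ Pmod K 𝔞 ↔ c ∈ (b0 K 𝔞 x y)⁻¹ := by
  rw [mem_inv_iff_spanSingleton_mul_le_one (b0_ne_zero ha hxy), b0, mul_add, mul_left_comm,
    spanSingleton_mul_spanSingleton, spanSingleton_mul_spanSingleton, ← sup_eq_add, sup_le_iff,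
    inv_mul_le_one_iff ha, spanSingleton_le_iff_mem, spanSingleton_le_iff_mem]
  rfl

noncomputable def lineSubmoduleEquiv {𝔞 : FractionalIdeal (nonZeroDivisors (𝓞 K)) K} {x y : K}
    (hxy : (x, y) ≠ (0, 0)) :
    ((b0 K 𝔞 x y)⁻¹ : FractionalIdeal (nonZeroDivisors (𝓞 K)) K) ≃ₗ[𝓞 K] lineSubmodule K 𝔞 x y :=
  Submodule.equivMapOfInjective _ (smul_left_injective K hxy) _

theorem le_lineSubmodule_of_rank_le_one {𝔞 : FractionalIdeal (nonZeroDivisors (𝓞 K)) K}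
    (ha : 𝔞 ≠ 0) {Q : Submodule (𝓞 K) (K × K)} (hQP : Q ≤ Pmod K 𝔞)
    (hQ : Module.rank (𝓞 K) Q ≤ 1) {x y : K} (hxy : (x, y) ≠ (0, 0)) (hxyQ : (x, y) ∈ Q) :
    Q ≤ lineSubmodule K 𝔞 x y := by
  intro q hq
  obtain ⟨c, rfl⟩ := exists_smul_eq_of_not_linearIndependent_pair (R := 𝓞 K) (L := K) hxy
    (Q.not_linearIndependent_pair_of_rank_le_one hQ hxyQ hq)
  exact ⟨c, (lineMap'_mem_Pmod_iff ha hxy c).mp (hQP hq), rfl⟩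

end NumberField

/-- For `P = 𝓞_K ⊕ 𝔞`: (i) for any nonzero `(x,y) ∈ K²`, the submodule `𝔟₀⁻¹·(x,y)`
(with `𝔟₀ = 𝓞_K·x + 𝔞⁻¹·y`) is a rank one projective `𝓞 K`-submodule of `P`, and
(ii) every rank one projective `𝓞 K`-submodule of `P` is contained in some such
`𝔟₀⁻¹·(x,y)`. -/
theorem rank_one_submodules_of_OK_sum_ideal
    (𝔞 : FractionalIdeal (nonZeroDivisors (𝓞 K)) K) (ha : 𝔞 ≠ 0) :
    (∀ x y : K, (x, y) ≠ (0, 0) →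
      lineSubmodule K 𝔞 x y ≤ Pmod K 𝔞 ∧
      Module.Projective (𝓞 K) ↥(lineSubmodule K 𝔞 x y) ∧
      Module.rank (𝓞 K) ↥(lineSubmodule K 𝔞 x y) = 1) ∧
    (∀ Q : Submodule (𝓞 K) (K × K), Q ≤ Pmod K 𝔞 → Module.Projective (𝓞 K) ↥Q →
      Module.rank (𝓞 K) ↥Q = 1 →
      ∃ x y : K, (x, y) ≠ (0, 0) ∧ Q ≤ lineSubmodule K 𝔞 x y) := by
  refine ⟨fun x y hxy => ?_, fun Q hQP _ hQ => ?_⟩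
  · have hb0 : (b0 K 𝔞 x y)⁻¹ ≠ 0 := inv_ne_zero (b0_ne_zero ha hxy)
    have := FractionalIdeal.projective hb0
    refine ⟨?_, .of_equiv (lineSubmoduleEquiv hxy), ?_⟩
    · rintro _ ⟨c, hc, rfl⟩
      exact (lineMap'_mem_Pmod_iff ha hxy c).mpr hc
    · rw [← (lineSubmoduleEquiv hxy).rank_eq, FractionalIdeal.rank_eq_one hb0]
  · obtain ⟨⟨x, y⟩, hxyQ, hxy⟩ := Q.exists_mem_ne_zero_of_ne_bot (by rintro rfl; simp at hQ)
    exact ⟨x, y, hxy, le_lineSubmodule_of_rank_le_one ha hQP hQ.le hxy hxyQ⟩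
end

section
/- For Re(s) > 1/2 and nonzero real n, the integral ∫_{-∞}^{∞} (1+t²)^{-s} e^{-2πint} dt equals 2π^s |n|^{s-1/2} Γ(s)^{-1} K_{s-1/2}(2π|n|), where K_ν is the modified Bessel function of the second kind. -/
/-!
Write `(1 + t²)^{-s} = Γ(s)⁻¹ ∫₀^∞ u^{s-1} e^{-(1+t²)u} du` and swap the two integrals; this is
legitimate because the absolute integrand integrates in `u` to `Γ(Re s) (1 + t²)^{-Re s}`, which is
integrable in `t` exactly when `Re s > 1/2`. The inner `t`-integral is then a Gaussian Fourier
transform, equal to `√(π/u) e^{-u - π²n²/u}`, which leaves `√π ∫₀^∞ u^{ν-1} e^{-u - c²/u} du` with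
`ν = s - 1/2` and `c = π|n|`. The substitution `u = c e^y` turns this into
`c^ν ∫_ℝ e^{νy - 2c cosh y} dy`, and folding `ℝ` onto `(0, ∞)` gives `2 c^ν K_ν(2c)`.
-/

/-- The modified Bessel function of the second kind `K_ν(x)`, for `x > 0`,
via the integral representation `K_ν(x) = ∫_0^∞ exp(-x cosh t) cosh(ν t) dt`. -/
noncomputable def besselK (ν : ℂ) (x : ℝ) : ℂ :=
  ∫ t in Set.Ioi (0 : ℝ), (Real.exp (-x * Real.cosh t) : ℂ) * Complex.cosh (ν * t)

open MeasureTheory Set Complex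
open scoped Real

lemma Real.sq_div_four_le_cosh (y : ℝ) : y ^ 2 / 4 ≤ Real.cosh y := by
  have h := Real.pow_div_factorial_le_exp _ (abs_nonneg y) 2
  rw [sq_abs, Nat.factorial_two, Nat.cast_two] at h
  rw [← Real.cosh_abs, Real.cosh_eq]
  linarith [Real.exp_pos (-|y|)]

lemma integrable_cexp_mul_sub_mul_cosh (ν : ℂ) {X : ℝ} (hX : 0 < X) :
    Integrable fun y : ℝ => cexp (ν * y - X * Real.cosh y) := by
  refine (integrable_cexp_quadratic (b := X / 4) (by simp; positivity) ν.re 0).mono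
    (by fun_prop) (ae_of_all _ fun y => ?_)
  rw [norm_exp, norm_exp, Real.exp_le_exp]
  simp only [ofReal_cosh, sub_re, mul_re, ofReal_re, ofReal_im, mul_zero, sub_zero, cosh_ofReal_re,
    cosh_ofReal_im, ← ofReal_pow, neg_mul, add_zero, add_re, neg_re, div_ofNat_re, div_ofNat_im,
    zero_div, le_neg_add_iff_add_le]
  nlinarith [Real.sq_div_four_le_cosh y]

lemma integral_cexp_mul_sub_mul_cosh_eq_two_mul_besselK (ν : ℂ) {X : ℝ} (hX : 0 < X) :
    ∫ y : ℝ, cexp (ν * y - X * Real.cosh y) = 2 * besselK ν X := by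
  have hf := integrable_cexp_mul_sub_mul_cosh ν hX
  rw [← intervalIntegral.integral_Iic_add_Ioi (b := 0) hf.integrableOn hf.integrableOn,
    ← neg_zero, ← integral_comp_neg_Ioi, neg_zero,
    ← integral_add hf.comp_neg.integrableOn hf.integrableOn, besselK, ← integral_const_mul]
  refine setIntegral_congr_fun measurableSet_Ioi fun y _ => ?_
  simp only [Real.cosh_neg, Complex.cosh, ofReal_exp]
  push_cast
  rw [sub_eq_add_neg, sub_eq_add_neg, Complex.exp_add, Complex.exp_add, neg_mul, mul_neg]
  ring

lemma integral_Ioi_zero_eq_integral_exp_smul_comp_exp {E : Type*} [NormedAddCommGroup E]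
    [NormedSpace ℝ E] (g : ℝ → E) :
    ∫ x in Ioi 0, g x = ∫ y, Real.exp y • g (Real.exp y) := by
  rw [← Real.range_exp, ← image_univ,
    integral_image_eq_integral_abs_deriv_smul MeasurableSet.univ
      (fun x _ => (Real.hasDerivAt_exp x).hasDerivWithinAt) Real.exp_injective.injOn g]
  simp [abs_of_pos (Real.exp_pos _)]

lemma integral_cpow_mul_cexp_neg_add_sq_div_eq_besselK (ν : ℂ) {c : ℝ} (hc : 0 < c) :
    ∫ u in Ioi (0 : ℝ), (u : ℂ) ^ (ν - 1) * cexp (-(u + c ^ 2 / u)) =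
      2 * c ^ ν * besselK ν (2 * c) := by
  set g : ℝ → ℂ := fun u => (u : ℂ) ^ (ν - 1) * cexp (-(u + c ^ 2 / u))
  have hg (y : ℝ) : Real.exp y • g (c * Real.exp y) =
      c ^ (ν - 1) * cexp (ν * y - (2 * c : ℝ) * Real.cosh y) := by
    have hpow : ((c * Real.exp y : ℝ) : ℂ) ^ (ν - 1) = c ^ (ν - 1) * cexp ((ν - 1) * y) := by
      rw [ofReal_mul, mul_cpow_ofReal_nonneg hc.le (Real.exp_pos y).le, ofReal_exp,
        cpow_def_of_ne_zero (exp_ne_zero _),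
        log_exp (by simpa using Real.pi_pos) (by simpa using Real.pi_pos.le), mul_comm (y : ℂ)]
    simp only [g, real_smul, hpow]
    rw [mul_left_comm, mul_assoc, ofReal_exp, ← Complex.exp_add, ← Complex.exp_add]
    congr 2
    push_cast
    rw [Complex.cosh, Complex.exp_neg]
    field_simp
    ring
  have hc_pow : (c : ℂ) ^ ν = c * c ^ (ν - 1) := by
    conv_lhs => rw [← add_sub_cancel (1 : ℂ) ν, cpow_add _ _ (ofReal_ne_zero.2 hc.ne'), cpow_one]
  calc ∫ u in Ioi 0, g u = c • ∫ x in Ioi 0, g (c * x) := by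
        simpa using (integral_comp_mul_left_Ioi' g 0 hc).symm
    _ = c ^ ν * ∫ y : ℝ, cexp (ν * y - (2 * c : ℝ) * Real.cosh y) := by
        rw [integral_Ioi_zero_eq_integral_exp_smul_comp_exp]
        simp only [hg, integral_const_mul, real_smul, hc_pow, mul_assoc]
    _ = _ := by rw [integral_cexp_mul_sub_mul_cosh_eq_two_mul_besselK ν (by positivity)]; ring

lemma cpow_neg_eq_inv_Gamma_mul_integral {s : ℂ} (hs : 0 < s.re) {r : ℝ} (hr : 0 < r) :
    (r : ℂ) ^ (-s) = (Gamma s)⁻¹ * ∫ u in Ioi (0 : ℝ), (u : ℂ) ^ (s - 1) * cexp (-(r * u)) := by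
  rw [integral_cpow_mul_exp_neg_mul_Ioi hs hr, one_div, inv_cpow_ofReal_nonneg hr.le, cpow_neg,
    mul_comm _ (Gamma s), inv_mul_cancel_left₀ (Gamma_ne_zero_of_re_pos hs)]

lemma norm_cpow_mul_exp_neg_mul (a : ℂ) {r u : ℝ} (hu : 0 < u) :
    ‖(u : ℂ) ^ (a - 1) * cexp (-(r * u))‖ = u ^ (a.re - 1) * Real.exp (-(r * u)) := by
  rw [norm_mul, norm_cpow_eq_rpow_re_of_pos hu, norm_exp, ← ofReal_mul, ← ofReal_neg, ofReal_re,
    sub_re, one_re]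

lemma integrableOn_cpow_mul_exp_neg_mul_Ioi {a : ℂ} (ha : 0 < a.re) {r : ℝ} (hr : 0 < r) :
    IntegrableOn (fun u : ℝ => (u : ℂ) ^ (a - 1) * cexp (-(r * u))) (Ioi 0) := by
  have hreal := integrableOn_rpow_mul_exp_neg_mul_rpow (s := a.re - 1) (by linarith) one_pos hr
  simp only [Real.rpow_one, neg_mul] at hreal
  refine hreal.mono' ?_ ((ae_restrict_iff' measurableSet_Ioi).2 (ae_of_all _ fun u hu => ?_))
  · fun_prop
  · rw [norm_cpow_mul_exp_neg_mul a hu]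

lemma integrable_cpow_mul_cexp_neg_one_add_sq_mul_mul_cexp {s : ℂ} (hs : 1 / 2 < s.re) (n : ℝ) :
    Integrable (Function.uncurry fun t u : ℝ =>
        (u : ℂ) ^ (s - 1) * cexp (-((1 + t ^ 2 : ℝ) * u)) * cexp (-2 * π * I * n * t))
      (volume.prod (volume.restrict (Ioi 0))) := by
  have hσ : 0 < s.re := by linarith
  have hnorm (t : ℝ) : ∫ u in Ioi (0 : ℝ),
      ‖(u : ℂ) ^ (s - 1) * cexp (-((1 + t ^ 2 : ℝ) * u)) * cexp (-2 * π * I * n * t)‖ =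
      Real.Gamma s.re * (1 + ‖t‖ ^ 2) ^ (-(2 * s.re) / 2) := by
    have hr : 0 < 1 + t ^ 2 := by positivity
    have hphase : ‖cexp (-2 * π * I * n * t)‖ = 1 := by
      rw [norm_exp]; simp
    rw [setIntegral_congr_fun measurableSet_Ioi fun (u : ℝ) (hu : 0 < u) => by
        rw [norm_mul, hphase, mul_one, norm_cpow_mul_exp_neg_mul s hu],
      Real.integral_rpow_mul_exp_neg_mul_Ioi hσ hr, Real.norm_eq_abs, sq_abs, neg_div,
      mul_div_cancel_left₀ _ two_ne_zero, one_div, Real.inv_rpow hr.le, Real.rpow_neg hr.le,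
      mul_comm]
  have hmeas : Measurable (Function.uncurry fun t u : ℝ =>
      (u : ℂ) ^ (s - 1) * cexp (-((1 + t ^ 2 : ℝ) * u)) * cexp (-2 * π * I * n * t)) := by
    fun_prop
  rw [integrable_prod_iff hmeas.aestronglyMeasurable]
  simp only [Function.uncurry_apply_pair, hnorm]
  exact ⟨ae_of_all _ fun t =>
      (integrableOn_cpow_mul_exp_neg_mul_Ioi hσ (by positivity)).mul_const _,
    (integrable_rpow_neg_one_add_norm_sq (by simp; linarith)).const_mul _⟩

lemma integral_cexp_neg_one_add_sq_mul_mul_cexp (n : ℝ) {u : ℝ} (hu : 0 < u) :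
    ∫ t : ℝ, cexp (-((1 + t ^ 2 : ℝ) * u)) * cexp (-2 * π * I * n * t) =
      (π / u) ^ (1 / 2 : ℂ) * cexp (-(u + ((π * |n| : ℝ) : ℂ) ^ 2 / u)) := by
  have hquad (t : ℝ) : cexp (-((1 + t ^ 2 : ℝ) * u)) * cexp (-2 * π * I * n * t) =
      cexp (-u * t ^ 2 + (-2 * π * I * n) * t + -u) := by
    rw [← Complex.exp_add]; push_cast; ring_nf
  simp_rw [hquad]
  rw [integral_cexp_quadratic (by simpa using hu), neg_neg]
  congr 2
  have habs : ((|n| : ℝ) : ℂ) ^ 2 = (n : ℂ) ^ 2 := by rw [← ofReal_pow, sq_abs, ofReal_pow]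
  push_cast
  rw [mul_pow (π : ℂ), habs]
  have hu' : (u : ℂ) ≠ 0 := ofReal_ne_zero.2 hu.ne'
  field_simp
  linear_combination (4 * π ^ 2 * n ^ 2 : ℂ) * I_sq

lemma integral_cpow_mul_cexp_neg_one_add_sq_mul_mul_cexp (s : ℂ) (n : ℝ) {u : ℝ} (hu : 0 < u) :
    ∫ t : ℝ, (u : ℂ) ^ (s - 1) * cexp (-((1 + t ^ 2 : ℝ) * u)) * cexp (-2 * π * I * n * t) =
      (π : ℂ) ^ (1 / 2 : ℂ) *
        ((u : ℂ) ^ (s - 1 / 2 - 1) * cexp (-(u + ((π * |n| : ℝ) : ℂ) ^ 2 / u))) := by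
  simp_rw [mul_assoc ((u : ℂ) ^ (s - 1))]
  rw [integral_const_mul, integral_cexp_neg_one_add_sq_mul_mul_cexp n hu,
    div_cpow_ofReal_nonneg Real.pi_pos.le hu.le, sub_right_comm,
    cpow_sub (s - 1) _ (ofReal_ne_zero.2 hu.ne')]
  ring

/-- For `Re(s) > 1/2` and nonzero real `n`,
`∫_{-∞}^{∞} (1+t²)^{-s} e^{-2πint} dt = 2 π^s |n|^{s-1/2} Γ(s)^{-1} K_{s-1/2}(2π|n|)`. -/
theorem integral_one_add_sq_cpow_neg_mul_exp (s : ℂ) (hs : 1 / 2 < s.re) (n : ℝ) (hn : n ≠ 0) :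
    ∫ t : ℝ, ((1 : ℂ) + (t : ℂ) ^ 2) ^ (-s) * Complex.exp (-2 * Real.pi * Complex.I * n * t) =
      2 * (Real.pi : ℂ) ^ s * ((|n| : ℝ) : ℂ) ^ (s - 1 / 2) * (Complex.Gamma s)⁻¹ *
        besselK (s - 1 / 2) (2 * Real.pi * |n|) := by
  have hσ : 0 < s.re := by linarith
  have hc : 0 < π * |n| := mul_pos Real.pi_pos (abs_pos.2 hn)
  set F : ℝ → ℝ → ℂ := fun t u =>
    (u : ℂ) ^ (s - 1) * cexp (-((1 + t ^ 2 : ℝ) * u)) * cexp (-2 * π * I * n * t)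
  calc ∫ t : ℝ, ((1 : ℂ) + (t : ℂ) ^ 2) ^ (-s) * cexp (-2 * π * I * n * t)
      = ∫ t : ℝ, (Gamma s)⁻¹ * ∫ u in Ioi (0 : ℝ), F t u := by
        congr 1 with t
        rw [integral_mul_const, ← mul_assoc,
          ← cpow_neg_eq_inv_Gamma_mul_integral hσ (by positivity)]
        push_cast; rfl
    _ = (Gamma s)⁻¹ * ∫ u in Ioi (0 : ℝ), ∫ t : ℝ, F t u := by
        rw [integral_const_mul,
          integral_integral_swap (integrable_cpow_mul_cexp_neg_one_add_sq_mul_mul_cexp hs n)]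
    _ = (Gamma s)⁻¹ * ∫ u in Ioi (0 : ℝ), (π : ℂ) ^ (1 / 2 : ℂ) *
          ((u : ℂ) ^ (s - 1 / 2 - 1) * cexp (-(u + ((π * |n| : ℝ) : ℂ) ^ 2 / u))) := by
        congr 1
        exact setIntegral_congr_fun measurableSet_Ioi fun u (hu : 0 < u) =>
          integral_cpow_mul_cexp_neg_one_add_sq_mul_mul_cexp s n hu
    _ = _ := by
        rw [integral_const_mul, integral_cpow_mul_cexp_neg_add_sq_div_eq_besselK _ hc, ofReal_mul,
          mul_cpow_ofReal_nonneg Real.pi_pos.le (abs_nonneg n), ← mul_assoc (2 : ℝ)]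
        have hπ : (π : ℂ) ^ s = π ^ (1 / 2 : ℂ) * π ^ (s - 1 / 2) := by
          rw [← cpow_add _ _ (ofReal_ne_zero.2 Real.pi_ne_zero), add_sub_cancel]
        rw [hπ]
        ring
end

section
/- Let ξ(s) = π^{-s/2}Γ(s/2)ζ(s) be the completed Riemann zeta function and define the rank two zeta function of ℚ by ξ_{ℚ,2}(s) = ξ(2s)/(s−1) − ξ(2s−1)/s. Then ξ_{ℚ,2}(s) satisfies the functional equation ξ_{ℚ,2}(1−s) = ξ_{ℚ,2}(s). -/
/-- The rank two non-abelian zeta function of `ℚ`: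
`ξ_{ℚ,2}(s) = ξ(2s)/(s−1) − ξ(2s−1)/s`, where `ξ` is the completed Riemann zeta. -/
noncomputable def xiQ2 (s : ℂ) : ℂ :=
  completedRiemannZeta (2 * s) / (s - 1) - completedRiemannZeta (2 * s - 1) / s

/-- Functional equation of the rank two zeta function: `ξ_{ℚ,2}(1−s) = ξ_{ℚ,2}(s)`. -/
theorem xiQ2_one_sub (s : ℂ) : xiQ2 (1 - s) = xiQ2 s := by
  unfold xiQ2
  have h1 : 2 * (1 - s) = 1 - (2 * s - 1) := by ring
  have h2 : 1 - (2 * s - 1) - 1 = 1 - 2 * s := by ring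
  have h3 : ∀ a : ℂ, a / (1 - s) = -(a / (s - 1)) := fun a => by
    rw [← div_neg, neg_sub]
  have h4 : ∀ a : ℂ, a / (1 - s - 1) = -(a / s) := fun a => by
    rw [show (1 : ℂ) - s - 1 = -s by ring, div_neg]
  rw [h1, h2, completedRiemannZeta_one_sub, completedRiemannZeta_one_sub, h3, h4]
  ring
end
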